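/- Let |ψ₁⟩ = ½(|00⟩+|01⟩−|10⟩+|11⟩), |ψ₂⟩ = ½(|00⟩−|01⟩+|10⟩+|11⟩), |ψ₃⟩ = ½(|00⟩+i|01⟩−i|10⟩−|11⟩), |ψ₄⟩ = ½(|00⟩−i|01⟩+i|10⟩−|11⟩). Then for each i ∈ {1,2,3,4}, the sum over the four standard basis vectors |s⟩ of U_{|s⟩}|ψ_i⟩⟨ψ_i|U_{|s⟩} equals the identity operator on ℂ² ⊗ ℂ², and consequently (1/16) Σ_{i=1}^4 Σ_s U_{|s⟩}|ψ_i⟩⟨ψ_i|U_{|s⟩} = I/4. Hence the scheme with this nonce set ensures secrecy against an honest-but-curious party and protection against intercept-measure-resend attacks. -/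
import Mathlib


open scoped ComplexConjugate
open Finset

noncomputable section

/-- Standard (computational) basis vector `|s⟩` of the two-qubit space `ℂ² ⊗ ℂ²`. -/
def e (s : Fin 2 × Fin 2) : Fin 2 × Fin 2 → ℂ := fun p => if p = s then 1 else 0

/-- The standard inner product `⟨u|v⟩` on two-qubit vectors
(conjugate-linear in the first argument). -/
def inner2 (u v : Fin 2 × Fin 2 → ℂ) : ℂ := ∑ p, conj (u p) * v p

/-- The Grover reflection operator `U_{|x⟩} = I - 2|x⟩⟨x|` applied to `v`. -/
def grover (x v : Fin 2 × Fin 2 → ℂ) : Fin 2 × Fin 2 → ℂ :=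
  v - (2 * inner2 x v) • x

/-- The outer product `|v⟩⟨v|` of a two-qubit vector, as a matrix. -/
def outer (v : Fin 2 × Fin 2 → ℂ) : Matrix (Fin 2 × Fin 2) (Fin 2 × Fin 2) ℂ :=
  Matrix.of fun p q => v p * conj (v q)

/-- The nonce `|ψ₁⟩ = ½(|00⟩ + |01⟩ − |10⟩ + |11⟩)`. -/
def psi1 : Fin 2 × Fin 2 → ℂ :=
  (1 / 2 : ℂ) • (e (0, 0) + e (0, 1) - e (1, 0) + e (1, 1))

/-- The nonce `|ψ₂⟩ = ½(|00⟩ − |01⟩ + |10⟩ + |11⟩)`. -/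
def psi2 : Fin 2 × Fin 2 → ℂ :=
  (1 / 2 : ℂ) • (e (0, 0) - e (0, 1) + e (1, 0) + e (1, 1))

/-- The nonce `|ψ₃⟩ = ½(|00⟩ + i|01⟩ − i|10⟩ − |11⟩)`. -/
def psi3 : Fin 2 × Fin 2 → ℂ :=
  (1 / 2 : ℂ) • (e (0, 0) + Complex.I • e (0, 1) - Complex.I • e (1, 0) - e (1, 1))

/-- The nonce `|ψ₄⟩ = ½(|00⟩ − i|01⟩ + i|10⟩ − |11⟩)`. -/
def psi4 : Fin 2 × Fin 2 → ℂ :=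
  (1 / 2 : ℂ) • (e (0, 0) - Complex.I • e (0, 1) + Complex.I • e (1, 0) - e (1, 1))


set_option maxHeartbeats 1000000 in
lemma sum_psi1 : (∑ s : Fin 2 × Fin 2, outer (grover (e s) psi1))
    = (1 : Matrix (Fin 2 × Fin 2) (Fin 2 × Fin 2) ℂ) := by
  ext p q
  fin_cases p <;> fin_cases q <;>
    simp only [Matrix.sum_apply, outer, grover, inner2, e, psi1, Fintype.sum_prod_type,
      Fin.sum_univ_two, Matrix.of_apply, Pi.sub_apply, Pi.smul_apply, Pi.add_apply,
      smul_eq_mul, Matrix.one_apply, Prod.mk.injEq, Fin.isValue] <;>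
    norm_num [Prod.ext_iff] <;>
    ring_nf <;>
    simp [Complex.ext_iff] <;> try ring_nf <;> norm_num

set_option maxHeartbeats 1000000 in
lemma sum_psi2 : (∑ s : Fin 2 × Fin 2, outer (grover (e s) psi2))
    = (1 : Matrix (Fin 2 × Fin 2) (Fin 2 × Fin 2) ℂ) := by
  ext p q
  fin_cases p <;> fin_cases q <;>
    simp only [Matrix.sum_apply, outer, grover, inner2, e, psi2, Fintype.sum_prod_type,
      Fin.sum_univ_two, Matrix.of_apply, Pi.sub_apply, Pi.smul_apply, Pi.add_apply,
      smul_eq_mul, Matrix.one_apply, Prod.mk.injEq, Fin.isValue] <;>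
    norm_num [Prod.ext_iff] <;>
    ring_nf <;>
    simp [Complex.ext_iff] <;> try ring_nf <;> norm_num

set_option maxHeartbeats 1000000 in
lemma sum_psi3 : (∑ s : Fin 2 × Fin 2, outer (grover (e s) psi3))
    = (1 : Matrix (Fin 2 × Fin 2) (Fin 2 × Fin 2) ℂ) := by
  ext p q
  fin_cases p <;> fin_cases q <;>
    simp only [Matrix.sum_apply, outer, grover, inner2, e, psi3, Fintype.sum_prod_type,
      Fin.sum_univ_two, Matrix.of_apply, Pi.sub_apply, Pi.smul_apply, Pi.add_apply,
      smul_eq_mul, Matrix.one_apply, Prod.mk.injEq, Fin.isValue] <;>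
    norm_num [Prod.ext_iff] <;>
    ring_nf <;>
    simp [Complex.ext_iff] <;> try ring_nf <;> norm_num

set_option maxHeartbeats 1000000 in
lemma sum_psi4 : (∑ s : Fin 2 × Fin 2, outer (grover (e s) psi4))
    = (1 : Matrix (Fin 2 × Fin 2) (Fin 2 × Fin 2) ℂ) := by
  ext p q
  fin_cases p <;> fin_cases q <;>
    simp only [Matrix.sum_apply, outer, grover, inner2, e, psi4, Fintype.sum_prod_type,
      Fin.sum_univ_two, Matrix.of_apply, Pi.sub_apply, Pi.smul_apply, Pi.add_apply,
      smul_eq_mul, Matrix.one_apply, Prod.mk.injEq, Fin.isValue] <;>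
    norm_num [Prod.ext_iff] <;>
    ring_nf <;>
    simp [Complex.ext_iff] <;> try ring_nf <;> norm_num

/-- For each proposed nonce `|ψ_i⟩`, `Σ_s U_{|s⟩}|ψ_i⟩⟨ψ_i|U_{|s⟩} = I`, and consequently
the uniform mixture of all the shared states is maximally mixed:
`(1/16) Σ_i Σ_s U_{|s⟩}|ψ_i⟩⟨ψ_i|U_{|s⟩} = I/4`. Hence the scheme with this nonce set
ensures secrecy and protection against intercept-measure-resend attacks. -/
theorem proposed_nonces_secrecy_and_imr_protection :
    (∀ ψ ∈ ({psi1, psi2, psi3, psi4} : Set (Fin 2 × Fin 2 → ℂ)),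
      (∑ s : Fin 2 × Fin 2, outer (grover (e s) ψ))
        = (1 : Matrix (Fin 2 × Fin 2) (Fin 2 × Fin 2) ℂ)) ∧
    ((1 / 16 : ℂ) • ∑ s : Fin 2 × Fin 2,
        (outer (grover (e s) psi1) + outer (grover (e s) psi2) +
          outer (grover (e s) psi3) + outer (grover (e s) psi4))
      = (1 / 4 : ℂ) • (1 : Matrix (Fin 2 × Fin 2) (Fin 2 × Fin 2) ℂ)) := by
  constructor
  · intro ψ hψ
    rcases hψ with h | h | h | h <;> subst h <;>
      first
        | exact sum_psi1
        | exact sum_psi2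
        | exact sum_psi3
        | exact sum_psi4
  · rw [show (∑ s : Fin 2 × Fin 2,
        (outer (grover (e s) psi1) + outer (grover (e s) psi2) +
          outer (grover (e s) psi3) + outer (grover (e s) psi4)))
      = (∑ s : Fin 2 × Fin 2, outer (grover (e s) psi1)) +
        (∑ s : Fin 2 × Fin 2, outer (grover (e s) psi2)) +
        (∑ s : Fin 2 × Fin 2, outer (grover (e s) psi3)) +
        (∑ s : Fin 2 × Fin 2, outer (grover (e s) psi4)) by
        simp [Finset.sum_add_distrib]]
    rw [sum_psi1, sum_psi2, sum_psi3, sum_psi4]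
    module


end
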